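/- arXiv:2211.15241 — 4 statements merged into one kernel-verified Lean document; each statement's English description precedes it below -/
import Mathlib

section
/- If x* is a global solution of min_{||x||_1=1} ||Ax||_2^2 for a matrix A ∈ R^{D×n} with A^T A invertible, then y* = sgn(x*) is a global solution of max_{y ∈ {-1,+1}^n} y^T (A^T A)^{-1} y. -/
/-!
Put `B = AᵀA` and `m = ‖A x*‖₂² > 0`; both sides are compared with `1 / m`. By homogeneity the
minimality of `x*` says `m ‖v‖₁² ≤ vᵀ B v` for every `v`. For a sign vector `y` and `v = B⁻¹ y`
we have `vᵀ B v = yᵀ v` and `|yᵀ v| ≤ ‖v‖₁`, hence `m (yᵀ v)² ≤ yᵀ v`, i.e. `yᵀ B⁻¹ y ≤ 1 / m`.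
Conversely, the form of `B` is nonnegative at `B⁻¹ s - t x*`, which gives
`sᵀ B⁻¹ s ≥ 2 t sᵀ x* - t² m`; for `s = sgn x*` we have `sᵀ x* = ‖x*‖₁ = 1`, and `t = 1 / m`
yields `sᵀ B⁻¹ s ≥ 1 / m`.
-/

open Matrix Finset

noncomputable section

/-- entrywise sign with sgn(0)=1 -/
def sgn (r : ℝ) : ℝ := if r < 0 then -1 else 1

def l1 {n : ℕ} (x : Fin n → ℝ) : ℝ := ∑ i, |x i|
def l2sq {n : ℕ} (x : Fin n → ℝ) : ℝ := ∑ i, (x i) ^ 2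
def l2 {n : ℕ} (x : Fin n → ℝ) : ℝ := Real.sqrt (l2sq x)

def cl1 {n : ℕ} (x : Fin n → ℂ) : ℝ := ∑ i, ‖x i‖
def cl2sq {n : ℕ} (x : Fin n → ℂ) : ℝ := ∑ i, Complex.normSq (x i)
def cl2 {n : ℕ} (x : Fin n → ℂ) : ℝ := Real.sqrt (cl2sq x)

/-- spectral (ℓ2 operator) norm of a real square matrix -/
def opNorm {n : ℕ} (A : Matrix (Fin n) (Fin n) ℝ) : ℝ :=
  sSup {r | ∃ x : Fin n → ℝ, l2 x = 1 ∧ r = l2 (A.mulVec x)}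

/-- spectral (ℓ2 operator) norm of a complex square matrix -/
def opNormC {n : ℕ} (A : Matrix (Fin n) (Fin n) ℂ) : ℝ :=
  sSup {r | ∃ x : Fin n → ℂ, cl2 x = 1 ∧ r = cl2 (A.mulVec x)}

/-- ℓ∞ operator norm (max absolute row sum) of a real square matrix -/
def infNorm {n : ℕ} (A : Matrix (Fin n) (Fin n) ℝ) : ℝ := ⨆ i, ∑ j, |A i j|

/-- ℓ∞ operator norm (max absolute row sum) of a complex square matrix -/
def infNormC {n : ℕ} (A : Matrix (Fin n) (Fin n) ℂ) : ℝ := ⨆ i, ∑ j, ‖A i j‖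

/-- complex torus: unit-modulus entries -/
def onTorus {n : ℕ} (x : Fin n → ℂ) : Prop := ∀ i, ‖x i‖ = 1

/-- real part of the Hermitian quadratic form x ↦ xᴴ C x -/
def quadC {n : ℕ} (C : Matrix (Fin n) (Fin n) ℂ) (x : Fin n → ℂ) : ℝ :=
  (star x ⬝ᵥ C.mulVec x).re

namespace Matrix

variable {ι : Type*} [Fintype ι] {B : Matrix ι ι ℝ}

lemma IsSymm.dotProduct_mulVec_comm (hB : B.IsSymm) (v w : ι → ℝ) :
    v ⬝ᵥ B *ᵥ w = B *ᵥ v ⬝ᵥ w := by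
  rw [dotProduct_mulVec, ← mulVec_transpose, hB.eq]

lemma mulVec_nonsing_inv_mulVec [DecidableEq ι] (hB : IsUnit B) (v : ι → ℝ) :
    B *ᵥ (B⁻¹ *ᵥ v) = v := by
  rw [mulVec_mulVec, mul_nonsing_inv _ ((isUnit_iff_isUnit_det B).mp hB), one_mulVec]

lemma PosSemidef.two_mul_dotProduct_sub_le [DecidableEq ι] (hB : B.PosSemidef) (hBu : IsUnit B)
    (s x : ι → ℝ) (t : ℝ) :
    2 * t * (s ⬝ᵥ x) - t ^ 2 * (x ⬝ᵥ B *ᵥ x) ≤ s ⬝ᵥ B⁻¹ *ᵥ s := by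
  have hBs : B.IsSymm := isHermitian_iff_isSymm.mp hB.1
  set u := B⁻¹ *ᵥ s
  have hu : B *ᵥ u = s := mulVec_nonsing_inv_mulVec hBu s
  have hnonneg : 0 ≤ (u - t • x) ⬝ᵥ B *ᵥ (u - t • x) := by
    simpa only [star_trivial] using hB.dotProduct_mulVec_nonneg (u - t • x)
  have hux : u ⬝ᵥ B *ᵥ x = s ⬝ᵥ x := by rw [hBs.dotProduct_mulVec_comm, hu]
  have hxu : x ⬝ᵥ B *ᵥ u = s ⬝ᵥ x := by rw [hu, dotProduct_comm]
  have huu : u ⬝ᵥ B *ᵥ u = s ⬝ᵥ u := by rw [hu, dotProduct_comm]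
  rw [mulVec_sub, mulVec_smul, sub_dotProduct, dotProduct_sub, dotProduct_sub, smul_dotProduct,
    smul_dotProduct, dotProduct_smul, dotProduct_smul, hux, hxu, huu] at hnonneg
  simp only [smul_eq_mul] at hnonneg
  nlinarith

end Matrix

lemma l1_smul {n : ℕ} (a : ℝ) (x : Fin n → ℝ) : l1 (a • x) = |a| * l1 x := by
  simp only [l1, Pi.smul_apply, smul_eq_mul, abs_mul, mul_sum]

lemma l2sq_eq_dotProduct_self {n : ℕ} (x : Fin n → ℝ) : l2sq x = x ⬝ᵥ x := by
  simp only [l2sq, dotProduct, sq]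

lemma l2sq_mulVec {D n : ℕ} (A : Matrix (Fin D) (Fin n) ℝ) (x : Fin n → ℝ) :
    l2sq (A *ᵥ x) = x ⬝ᵥ (Aᵀ * A) *ᵥ x := by
  rw [l2sq_eq_dotProduct_self, ← mulVec_mulVec, mulVec_transpose, dotProduct_comm x,
    ← dotProduct_mulVec]

lemma l2sq_nonneg {n : ℕ} (x : Fin n → ℝ) : 0 ≤ l2sq x := sum_nonneg fun i _ ↦ sq_nonneg (x i)

lemma l2sq_mulVec_pos {D n : ℕ} {A : Matrix (Fin D) (Fin n) ℝ} (hA : IsUnit (Aᵀ * A))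
    {x : Fin n → ℝ} (hx : x ≠ 0) : 0 < l2sq (A *ᵥ x) := by
  refine (l2sq_nonneg _).lt_of_ne' fun h ↦ hx ?_
  rw [l2sq_eq_dotProduct_self] at h
  apply mulVec_injective_of_isUnit hA
  rw [← mulVec_mulVec, dotProduct_self_eq_zero.mp h, mulVec_zero, mulVec_zero]

lemma abs_dotProduct_le_l1 {n : ℕ} {y : Fin n → ℝ} (hy : ∀ i, |y i| ≤ 1) (v : Fin n → ℝ) :
    |y ⬝ᵥ v| ≤ l1 v :=
  calc |y ⬝ᵥ v| ≤ ∑ i, |y i * v i| := abs_sum_le_sum_abs _ _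
    _ ≤ ∑ i, |v i| := sum_le_sum fun i _ ↦ by
        rw [abs_mul]; exact mul_le_of_le_one_left (abs_nonneg _) (hy i)

lemma sgn_mul_self (r : ℝ) : sgn r * r = |r| := by
  unfold sgn
  split_ifs with h
  · rw [abs_of_neg h, neg_one_mul]
  · rw [abs_of_nonneg (not_lt.mp h), one_mul]

lemma sgn_dotProduct_self {n : ℕ} (x : Fin n → ℝ) : (fun i ↦ sgn (x i)) ⬝ᵥ x = l1 x :=
  sum_congr rfl fun i _ ↦ sgn_mul_self (x i)

lemma mul_l1_sq_le_l2sq_mulVec {D n : ℕ} {A : Matrix (Fin D) (Fin n) ℝ} {m : ℝ}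
    (hmin : ∀ x, l1 x = 1 → m ≤ l2sq (A *ᵥ x)) (x : Fin n → ℝ) :
    m * l1 x ^ 2 ≤ l2sq (A *ᵥ x) := by
  have hx : 0 ≤ l1 x := sum_nonneg fun i _ ↦ abs_nonneg (x i)
  rcases hx.eq_or_lt with hx0 | hxpos
  · simpa [← hx0] using l2sq_nonneg (A *ᵥ x)
  · have hunit : l1 ((l1 x)⁻¹ • x) = 1 := by
      rw [l1_smul, abs_of_pos (inv_pos.mpr hxpos), inv_mul_cancel₀ hxpos.ne']
    have h := hmin _ hunit
    rw [mulVec_smul, l2sq_eq_dotProduct_self, smul_dotProduct, dotProduct_smul,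
      ← l2sq_eq_dotProduct_self, smul_eq_mul, smul_eq_mul, ← mul_assoc, ← sq, inv_pow,
      le_inv_mul_iff₀ (by positivity)] at h
    linarith

lemma dotProduct_inv_mulVec_le_one_div {n : ℕ} {B : Matrix (Fin n) (Fin n) ℝ}
    (hBu : IsUnit B) {m : ℝ} (hm : 0 < m) (hmin : ∀ v, m * l1 v ^ 2 ≤ v ⬝ᵥ B *ᵥ v)
    {y : Fin n → ℝ} (hy : ∀ i, |y i| ≤ 1) : y ⬝ᵥ B⁻¹ *ᵥ y ≤ 1 / m := by
  set v := B⁻¹ *ᵥ y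
  have hform : v ⬝ᵥ B *ᵥ v = y ⬝ᵥ v := by
    rw [mulVec_nonsing_inv_mulVec hBu, dotProduct_comm]
  have hsq : (y ⬝ᵥ v) ^ 2 ≤ l1 v ^ 2 := sq_le_sq.mpr <|
    (abs_dotProduct_le_l1 hy v).trans (le_abs_self _)
  have h := hmin v
  rw [hform] at h
  rw [le_div_iff₀ hm]
  nlinarith [mul_le_mul_of_nonneg_left hsq hm.le]

theorem stmt_0_general {D n : ℕ} (A : Matrix (Fin D) (Fin n) ℝ)
    (hinv : IsUnit (Aᵀ * A)) (xs : Fin n → ℝ) (hxs : l1 xs = 1)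
    (hopt : ∀ x : Fin n → ℝ, l1 x = 1 → l2sq (A.mulVec xs) ≤ l2sq (A.mulVec x)) :
    ∀ y : Fin n → ℝ, (∀ i, y i = 1 ∨ y i = -1) →
      y ⬝ᵥ ((Aᵀ * A)⁻¹).mulVec y ≤
        (fun i => sgn (xs i)) ⬝ᵥ ((Aᵀ * A)⁻¹).mulVec (fun i => sgn (xs i)) := by
  intro y hy
  set m := l2sq (A *ᵥ xs)
  have hB : (Aᵀ * A).PosSemidef := by
    simpa only [conjTranspose_eq_transpose_of_trivial] using posSemidef_conjTranspose_mul_self A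
  have hm : 0 < m := l2sq_mulVec_pos hinv fun h ↦ by simp [h, l1] at hxs
  have hupper : y ⬝ᵥ (Aᵀ * A)⁻¹ *ᵥ y ≤ 1 / m :=
    dotProduct_inv_mulVec_le_one_div hinv hm
      (fun v ↦ l2sq_mulVec A v ▸ mul_l1_sq_le_l2sq_mulVec hopt v)
      fun i ↦ by rcases hy i with h | h <;> simp [h]
  have hlower := hB.two_mul_dotProduct_sub_le hinv (fun i ↦ sgn (xs i)) xs (1 / m)
  rw [sgn_dotProduct_self, hxs, ← l2sq_mulVec] at hlower
  calc y ⬝ᵥ (Aᵀ * A)⁻¹ *ᵥ y ≤ 1 / m := hupper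
    _ = 2 * (1 / m) * 1 - (1 / m) ^ 2 * m := by field_simp; ring
    _ ≤ _ := hlower

theorem stmt_0 {D n : ℕ} (hDn : n < D) (A : Matrix (Fin D) (Fin n) ℝ)
    (hinv : IsUnit (Aᵀ * A)) (xs : Fin n → ℝ) (hxs : l1 xs = 1)
    (hopt : ∀ x : Fin n → ℝ, l1 x = 1 → l2sq (A.mulVec xs) ≤ l2sq (A.mulVec x)) :
    ∀ y : Fin n → ℝ, (∀ i, y i = 1 ∨ y i = -1) →
      y ⬝ᵥ ((Aᵀ * A)⁻¹).mulVec y ≤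
        (fun i => sgn (xs i)) ⬝ᵥ ((Aᵀ * A)⁻¹).mulVec (fun i => sgn (xs i)) :=
  stmt_0_general A hinv xs hxs hopt
end
end

section
/- Let C be a Hermitian N×N matrix and x* a global maximizer of f(x) = x^H C x over the torus T^N = {x ∈ C^N : |x_i| = 1 for all i}. Then for any x ∈ T^N, 0 ≤ f(x*) - f(x) ≤ -N λ_min(S(x)), where S(x) = Re(ddiag(C x x^H)) - C and ddiag zeros out off-diagonal entries. In particular, if S(x) ⪰ 0 then x is a global maximizer. -/
open Matrix Finset

noncomputable section

/-- Riemannian-Hessian-type matrix S(x) = Re(ddiag(C x xᴴ)) - C -/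
def Smat {N : ℕ} (C : Matrix (Fin N) (Fin N) ℂ) (x : Fin N → ℂ) :
    Matrix (Fin N) (Fin N) ℂ :=
  Matrix.diagonal (fun i => (((C.mulVec x) i * (starRingEnd ℂ) (x i)).re : ℂ)) - C

/-! On the torus `uᴴ D u = tr D` for every diagonal `D`, and `tr (Re ddiag (C x xᴴ)) = f(x)`.
Hence `uᴴ S(x) u = f(x) - f(u)` for all `u ∈ T^N`. Taking `u = x*`, whose squared norm is `N`,
the Rayleigh bound `λ_min ‖x*‖² ≤ x*ᴴ S(x) x*` gives `f(x*) - f(x) ≤ -N λ_min`; taking `u` arbitrary,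
`S(x) ⪰ 0` gives `f(u) ≤ f(x)`. -/

lemma normSq_eq_one_of_onTorus {n : ℕ} {u : Fin n → ℂ} (hu : onTorus u) (i : Fin n) :
    Complex.normSq (u i) = 1 := by
  rw [Complex.normSq_eq_norm_sq, hu i, one_pow]

lemma cl2sq_of_onTorus {n : ℕ} {u : Fin n → ℂ} (hu : onTorus u) : cl2sq u = n := by
  simp [cl2sq, normSq_eq_one_of_onTorus hu]

lemma quadC_eq_sum_re {n : ℕ} (C : Matrix (Fin n) (Fin n) ℂ) (v : Fin n → ℂ) :
    quadC C v = ∑ i, (C.mulVec v i * starRingEnd ℂ (v i)).re := by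
  simp only [quadC, dotProduct, Complex.re_sum, Pi.star_apply, mul_comm (star (v _))]
  rfl

lemma quadC_sub {n : ℕ} (A B : Matrix (Fin n) (Fin n) ℂ) (u : Fin n → ℂ) :
    quadC (A - B) u = quadC A u - quadC B u := by
  simp only [quadC, sub_mulVec, dotProduct_sub, Complex.sub_re]

lemma quadC_diagonal_ofReal_of_onTorus {n : ℕ} (d : Fin n → ℝ) {u : Fin n → ℂ}
    (hu : onTorus u) : quadC (diagonal fun i => (d i : ℂ)) u = ∑ i, d i := by
  refine (quadC_eq_sum_re _ u).trans (Finset.sum_congr rfl fun i _ => ?_)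
  rw [mulVec_diagonal, mul_assoc, Complex.mul_conj, normSq_eq_one_of_onTorus hu]
  simp

lemma quadC_Smat_of_onTorus {n : ℕ} (C : Matrix (Fin n) (Fin n) ℂ) (x : Fin n → ℂ)
    {u : Fin n → ℂ} (hu : onTorus u) : quadC (Smat C x) u = quadC C x - quadC C u := by
  rw [Smat, quadC_sub, quadC_diagonal_ofReal_of_onTorus _ hu, quadC_eq_sum_re C x]

theorem stmt_5_general {N : ℕ} (C : Matrix (Fin N) (Fin N) ℂ)
    (xs : Fin N → ℂ) (hxs : onTorus xs)
    (hopt : ∀ y : Fin N → ℂ, onTorus y → quadC C y ≤ quadC C xs)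
    (x : Fin N → ℂ) (hx : onTorus x)
    (lmin : ℝ)
    (hlmin : IsGreatest {t : ℝ | ∀ u : Fin N → ℂ, t * cl2sq u ≤ quadC (Smat C x) u} lmin) :
    (0 ≤ quadC C xs - quadC C x ∧ quadC C xs - quadC C x ≤ -(N : ℝ) * lmin) ∧
      ((∀ u : Fin N → ℂ, 0 ≤ quadC (Smat C x) u) →
        ∀ y : Fin N → ℂ, onTorus y → quadC C y ≤ quadC C x) := by
  have hrayleigh := hlmin.1 xs
  rw [quadC_Smat_of_onTorus C x hxs, cl2sq_of_onTorus hxs] at hrayleigh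
  refine ⟨⟨sub_nonneg.2 (hopt x hx), by linarith⟩, fun hpsd y hy => ?_⟩
  have hgap := hpsd y
  rw [quadC_Smat_of_onTorus C x hy] at hgap
  linarith

theorem stmt_5 {N : ℕ} (C : Matrix (Fin N) (Fin N) ℂ) (hC : C.IsHermitian)
    (xs : Fin N → ℂ) (hxs : onTorus xs)
    (hopt : ∀ y : Fin N → ℂ, onTorus y → quadC C y ≤ quadC C xs)
    (x : Fin N → ℂ) (hx : onTorus x)
    (lmin : ℝ)
    (hlmin : IsGreatest {t : ℝ | ∀ u : Fin N → ℂ, t * cl2sq u ≤ quadC (Smat C x) u} lmin) :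
    (0 ≤ quadC C xs - quadC C x ∧ quadC C xs - quadC C x ≤ -(N : ℝ) * lmin) ∧
      ((∀ u : Fin N → ℂ, 0 ≤ quadC (Smat C x) u) →
        ∀ y : Fin N → ℂ, onTorus y → quadC C y ≤ quadC C x) :=
  stmt_5_general C xs hxs hopt x hx lmin hlmin
end
end

section
/- Let Σ be a symmetric positive semidefinite N×N matrix with Moore–Penrose pseudoinverse Σ† and let u span the null space of Σ (with ||u||_2² = N, Σ of rank N-1). If σ||Σ†|| < 1, then the operator norm ||σN(Σ + σI)^{-1} - u u^T|| ≤ Nσ||Σ†|| / (1 - σ||Σ†||). -/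
open Matrix Finset

noncomputable section

/-!
`Σ Σ†` is the orthogonal projection onto `range Σ = u⊥`, so `Σ Σ† + u uᵀ / N = 1` and hence
`(Σ + σ I) (Σ† + u uᵀ / (σ N)) = I + σ Σ†`. Since `uᵀ Σ† = 0`, the matrix
`M = σ N (Σ + σ I)⁻¹ - u uᵀ` satisfies `M (I + σ Σ†) = σ N Σ†`, that is `M = σ N Σ† - σ M Σ†`,
and submultiplicativity of the norm gives `‖M‖ ≤ σ N ‖Σ†‖ + σ ‖Σ†‖ ‖M‖`: this is the geometric
series bound without the series.
-/

open scoped Matrix.Norms.L2Operator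

lemma l2_eq_norm_toLp {n : ℕ} (x : Fin n → ℝ) : l2 x = ‖WithLp.toLp 2 x‖ := by
  simp [l2, l2sq, EuclideanSpace.norm_eq]

lemma opNorm_eq_l2_opNorm {n : ℕ} (A : Matrix (Fin n) (Fin n) ℝ) : opNorm A = ‖A‖ := by
  rw [← l2_opNorm_toEuclideanCLM, ← ContinuousLinearMap.sSup_sphere_eq_norm, opNorm]
  congr 1
  ext r
  constructor
  · rintro ⟨x, hx, rfl⟩
    exact ⟨WithLp.toLp 2 x, by simpa [l2_eq_norm_toLp] using hx, by simp [l2_eq_norm_toLp]⟩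
  · rintro ⟨x, hx, rfl⟩
    exact ⟨x.ofLp, by simpa [l2_eq_norm_toLp] using hx,
      by rw [l2_eq_norm_toLp, ← toEuclideanCLM_toLp]⟩

lemma norm_le_div_of_mul_one_add_eq {R : Type*} [NormedRing R] {a b s : R}
    (h : a * (1 + s) = b) (hs : ‖s‖ < 1) : ‖a‖ ≤ ‖b‖ / (1 - ‖s‖) := by
  rw [le_div_iff₀ (by linarith)]
  have : ‖a‖ ≤ ‖b‖ + ‖a‖ * ‖s‖ := calc
    ‖a‖ = ‖b - a * s‖ := by rw [← h, mul_add, mul_one, add_sub_cancel_right]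
    _ ≤ ‖b‖ + ‖a * s‖ := norm_sub_le _ _
    _ ≤ ‖b‖ + ‖a‖ * ‖s‖ := by gcongr; exact norm_mul_le _ _
  linarith

namespace Matrix

lemma vecMul_eq_zero_of_mul_mul_eq_self {n R : Type*} [Fintype n] [CommSemiring R]
    {S P : Matrix n n R} {u : n → R} (hPSP : P * S * P = P) (hPS : (P * S)ᵀ = P * S)
    (hu : S *ᵥ u = 0) : u ᵥ* P = 0 := by
  calc u ᵥ* P = (u ᵥ* (P * S)) ᵥ* P := by rw [vecMul_vecMul, hPSP]
    _ = 0 := by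
      rw [← mulVec_transpose (P * S), hPS, ← mulVec_mulVec, hu, mulVec_zero, zero_vecMul]

section Projection

variable {n 𝕜 : Type*} [Fintype n] [Field 𝕜] {S P : Matrix n n 𝕜} {u : n → 𝕜}

lemma eq_zero_of_mul_eq_zero_of_mulVec_eq_zero [DecidableEq n] {R : Matrix n n 𝕜}
    (htop : LinearMap.range S.mulVecLin ⊔ 𝕜 ∙ u = ⊤) (hRS : R * S = 0) (hRu : R *ᵥ u = 0) :
    R = 0 := by
  have hker : LinearMap.ker R.mulVecLin = ⊤ := by
    rw [eq_top_iff, ← htop, sup_le_iff, Submodule.span_singleton_le_iff_mem]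
    refine ⟨?_, hRu⟩
    rintro _ ⟨v, rfl⟩
    simp [mulVec_mulVec, hRS]
  exact toLin'.injective (by rw [toLin'_apply', LinearMap.ker_eq_top.mp hker, map_zero])

variable [LinearOrder 𝕜] [IsStrictOrderedRing 𝕜]

lemma range_mulVecLin_sup_span_eq_top (hS : S.IsSymm) (hu : S *ᵥ u = 0) (hu0 : u ≠ 0)
    (hrank : S.rank = Fintype.card n - 1) :
    LinearMap.range S.mulVecLin ⊔ 𝕜 ∙ u = ⊤ := by
  have hdisj : LinearMap.range S.mulVecLin ⊓ 𝕜 ∙ u = ⊥ := by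
    rw [eq_bot_iff]
    rintro x ⟨⟨v, rfl⟩, hx⟩
    obtain ⟨c, hc⟩ := Submodule.mem_span_singleton.mp hx
    have huS : u ⬝ᵥ S *ᵥ v = 0 := by
      rw [dotProduct_mulVec, ← mulVec_transpose, hS.eq, hu, zero_dotProduct]
    rw [← mulVecLin_apply, ← hc, dotProduct_smul, smul_eq_mul,
      mul_eq_zero, or_iff_left (dotProduct_self_eq_zero.not.mpr hu0)] at huS
    simp [← hc, huS]
  have hdim := Submodule.finrank_sup_add_finrank_inf_eq (LinearMap.range S.mulVecLin) (𝕜 ∙ u)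
  rw [hdisj, finrank_bot, add_zero, finrank_span_singleton hu0] at hdim
  have hcard : 0 < Fintype.card n := Fintype.card_pos_iff.mpr (Function.ne_iff.mp hu0).nonempty
  apply Submodule.eq_top_of_finrank_eq
  rw [hdim, Module.finrank_fintype_fun_eq_card, ← rank, hrank]
  omega

variable [DecidableEq n]

lemma mul_add_inv_smul_vecMulVec_eq_one (hS : S.IsSymm) (hSPS : S * P * S = S)
    (hSP : (S * P)ᵀ = S * P) (hu : S *ᵥ u = 0) (hu0 : u ≠ 0)
    (hrank : S.rank = Fintype.card n - 1) :
    S * P + (u ⬝ᵥ u)⁻¹ • vecMulVec u u = 1 := by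
  have huS : u ᵥ* S = 0 := by rw [← mulVec_transpose, hS.eq, hu]
  have hSPu : (S * P) *ᵥ u = 0 := by
    rw [← hSP, mulVec_transpose, ← vecMul_vecMul, huS, zero_vecMul]
  have huu : u ⬝ᵥ u ≠ 0 := dotProduct_self_eq_zero.not.mpr hu0
  refine sub_eq_zero.mp (eq_zero_of_mul_eq_zero_of_mulVec_eq_zero
    (range_mulVecLin_sup_span_eq_top hS hu hu0 hrank) ?_ ?_)
  · rw [sub_mul, add_mul, hSPS, smul_mul, vecMulVec_mul, huS, vecMulVec_zero, smul_zero,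
      add_zero, one_mul, sub_self]
  · rw [sub_mulVec, add_mulVec, hSPu, smul_mulVec, vecMulVec_mulVec]
    simp [huu]

end Projection

section Resolvent

variable {n : Type*} [Fintype n] [DecidableEq n] {S P : Matrix n n ℝ} {u : n → ℝ}

lemma smul_inv_sub_vecMulVec_mul_one_add_smul (hS : S.PosSemidef) {σ : ℝ} (hσ : 0 < σ)
    (hproj : S * P + (u ⬝ᵥ u)⁻¹ • vecMulVec u u = 1) (hu : S *ᵥ u = 0) (huP : u ᵥ* P = 0)
    (huu : u ⬝ᵥ u ≠ 0) :
    ((σ * (u ⬝ᵥ u)) • (S + σ • 1)⁻¹ - vecMulVec u u) * (1 + σ • P) = (σ * (u ⬝ᵥ u)) • P := by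
  set c := σ * (u ⬝ᵥ u)
  have hc : c ≠ 0 := mul_ne_zero hσ.ne' huu
  have hA : IsUnit (S + σ • 1) := (PosDef.posSemidef_add hS (PosDef.one.smul hσ)).isUnit
  have hright : (S + σ • 1) * (P + c⁻¹ • vecMulVec u u) = 1 + σ • P := calc
    _ = S * P + σ • P + c⁻¹ • (S * vecMulVec u u) + (c⁻¹ * σ) • vecMulVec u u := by
      simp only [add_mul, mul_add, Matrix.mul_smul, smul_mul, one_mul, smul_smul]
      abel
    _ = 1 + σ • P := by
      rw [mul_vecMulVec, hu, zero_vecMulVec, smul_zero, add_zero, mul_inv, mul_right_comm,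
        inv_mul_cancel₀ hσ.ne', one_mul, add_right_comm, hproj]
  have hinv : (S + σ • 1)⁻¹ * (1 + σ • P) = P + c⁻¹ • vecMulVec u u := by
    rw [← hright, ← mul_assoc, nonsing_inv_mul _ ((isUnit_iff_isUnit_det _).mp hA), one_mul]
  rw [sub_mul, smul_mul, hinv, mul_add, mul_one, Matrix.mul_smul, vecMulVec_mul, huP,
    vecMulVec_zero, smul_zero, add_zero, smul_add, smul_smul, mul_inv_cancel₀ hc, one_smul,
    add_sub_cancel_right]

end Resolvent

end Matrix

theorem stmt_9 {N : ℕ} (Sig : Matrix (Fin N) (Fin N) ℝ) (hPSD : Sig.PosSemidef)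
    (hrank : Sig.rank = N - 1)
    (u : Fin N → ℝ) (hu : Sig.mulVec u = 0) (hunorm : l2sq u = N)
    (P : Matrix (Fin N) (Fin N) ℝ)
    (hP1 : Sig * P * Sig = Sig) (hP2 : P * Sig * P = P)
    (hP3 : (Sig * P)ᵀ = Sig * P) (hP4 : (P * Sig)ᵀ = P * Sig)
    (σ : ℝ) (hσ : 0 < σ) (hsmall : σ * opNorm P < 1) :
    opNorm ((σ * N) • (Sig + σ • (1 : Matrix (Fin N) (Fin N) ℝ))⁻¹ - Matrix.vecMulVec u u) ≤
      N * σ * opNorm P / (1 - σ * opNorm P) := by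
  obtain rfl | hN := eq_or_ne N 0
  · simp [opNorm_eq_l2_opNorm, Subsingleton.elim _ (0 : Matrix (Fin 0) (Fin 0) ℝ)]
  have huu : u ⬝ᵥ u = N := by simpa [l2sq, dotProduct, sq] using hunorm
  have hu0 : u ≠ 0 := fun h ↦ hN (by simpa [h] using huu.symm)
  have hproj := mul_add_inv_smul_vecMulVec_eq_one
    (isHermitian_iff_isSymm.mp hPSD.isHermitian) hP1 hP3 hu hu0 (by rwa [Fintype.card_fin])
  have key := smul_inv_sub_vecMulVec_mul_one_add_smul hPSD hσ hproj hu
    (vecMul_eq_zero_of_mul_mul_eq_self hP2 hP4 hu) (by rw [huu]; exact_mod_cast hN)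
  rw [huu] at key
  simp only [opNorm_eq_l2_opNorm] at hsmall ⊢
  have hσP : ‖σ • P‖ = σ * ‖P‖ := by rw [norm_smul, Real.norm_of_nonneg hσ.le]
  calc _ ≤ ‖(σ * N) • P‖ / (1 - ‖σ • P‖) := norm_le_div_of_mul_one_add_eq key (hσP ▸ hsmall)
    _ = N * σ * ‖P‖ / (1 - σ * ‖P‖) := by
      rw [hσP, norm_smul, Real.norm_of_nonneg (by positivity), mul_comm σ]
end
end

section
/- Let f(x) = x^H C x where C is a Hermitian PSD N×N matrix with C ⪰ a₀ I for some a₀ > 0. Let x^{k+1} = argmax_{y ∈ T^N} Re⟨y, C x^k⟩ (the generalized power method step, i.e., x^{k+1} = sgn(C x^k)). Then f(x^{k+1}) - f(x^k) ≥ a₀ ||x^{k+1} - x^k||_2², i.e., each iteration achieves sufficient ascent. -/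
open Matrix Finset

noncomputable section

/-
Write `d = y - x`. For Hermitian `C` the form expands as
`f(y) = f(x) + f(d) + 2 Re⟨d, Cx⟩`, and `f(d) ≥ a₀‖d‖²`. The cross term is nonnegative
coordinatewise: `y i = sgn((Cx) i)` attains `Re(conj(y i) (Cx) i) = |(Cx) i|`, the maximum of
`Re(conj w (Cx) i)` over `|w| ≤ 1`.
-/

open ComplexConjugate

namespace Complex

theorem re_conj_mul_le_norm {w : ℂ} (hw : ‖w‖ ≤ 1) (z : ℂ) : (conj w * z).re ≤ ‖z‖ :=
  calc (conj w * z).re ≤ ‖conj w * z‖ := re_le_norm _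
    _ = ‖w‖ * ‖z‖ := by rw [norm_mul, norm_conj]
    _ ≤ ‖z‖ := mul_le_of_le_one_left (norm_nonneg z) hw

-- At `z = 0` both sides are `0`, as `z / ‖z‖ = 0 / 0 = 0`.
theorem conj_div_norm_mul_self (z : ℂ) : conj (z / ‖z‖) * z = ‖z‖ := by
  rw [map_div₀, conj_ofReal, div_mul_eq_mul_div, mul_comm, mul_conj, normSq_eq_norm_sq]
  push_cast
  rw [sq, mul_self_div_self]

end Complex

theorem re_star_sub_dotProduct_nonneg {ι : Type*} [Fintype ι] {x v : ι → ℂ}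
    (hx : ∀ i, ‖x i‖ ≤ 1) :
    0 ≤ (star ((fun i => v i / ‖v i‖) - x) ⬝ᵥ v).re := by
  simp only [dotProduct, Complex.re_sum, Pi.star_apply, Pi.sub_apply, star_sub, sub_mul,
    Complex.sub_re, RCLike.star_def, Complex.conj_div_norm_mul_self, Complex.ofReal_re]
  exact Finset.sum_nonneg fun i _ => sub_nonneg.2 (Complex.re_conj_mul_le_norm (hx i) _)

theorem Matrix.IsHermitian.star_dotProduct_mulVec_comm {ι : Type*} [Fintype ι]
    {C : Matrix ι ι ℂ} (hC : C.IsHermitian) (u v : ι → ℂ) :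
    star u ⬝ᵥ C *ᵥ v = star (star v ⬝ᵥ C *ᵥ u) := by
  rw [star_dotProduct, star_mulVec, ← dotProduct_mulVec, hC.eq]

theorem quadC_add {N : ℕ} {C : Matrix (Fin N) (Fin N) ℂ} (hC : C.IsHermitian)
    (x d : Fin N → ℂ) :
    quadC C (x + d) = quadC C x + quadC C d + 2 * (star d ⬝ᵥ C *ᵥ x).re := by
  have hexp : star (x + d) ⬝ᵥ C *ᵥ (x + d)
      = star x ⬝ᵥ C *ᵥ x + star d ⬝ᵥ C *ᵥ d
        + (star d ⬝ᵥ C *ᵥ x + star (star d ⬝ᵥ C *ᵥ x)) := by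
    rw [← hC.star_dotProduct_mulVec_comm, star_add, mulVec_add, add_dotProduct,
      dotProduct_add, dotProduct_add]
    ring
  simp only [quadC, hexp, Complex.add_re, RCLike.star_def, Complex.conj_re]
  ring

theorem stmt_10_general {N : ℕ} (C : Matrix (Fin N) (Fin N) ℂ) (hC : C.IsHermitian)
    (a0 : ℝ)
    (hlb : ∀ u : Fin N → ℂ, a0 * cl2sq u ≤ quadC C u)
    (x y : Fin N → ℂ) (hx : onTorus x)
    (hy : ∀ i, y i = (C.mulVec x) i / (‖(C.mulVec x) i‖ : ℂ)) :
    a0 * cl2sq (fun i => y i - x i) ≤ quadC C y - quadC C x := by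
  have hcross : 0 ≤ (star (y - x) ⬝ᵥ C *ᵥ x).re := by
    rw [show y = fun i => (C *ᵥ x) i / ‖(C *ᵥ x) i‖ from funext hy]
    exact re_star_sub_dotProduct_nonneg fun i => (hx i).le
  have hexpand := quadC_add hC x (y - x)
  rw [add_sub_cancel] at hexpand
  have hd : a0 * cl2sq (fun i => y i - x i) ≤ quadC C (y - x) := hlb (y - x)
  linarith

theorem stmt_10 {N : ℕ} (C : Matrix (Fin N) (Fin N) ℂ) (hC : C.IsHermitian)
    (a0 : ℝ) (ha0 : 0 < a0)
    (hlb : ∀ u : Fin N → ℂ, a0 * cl2sq u ≤ quadC C u)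
    (x y : Fin N → ℂ) (hx : onTorus x)
    (hCx : ∀ i, (C.mulVec x) i ≠ 0)
    (hy : ∀ i, y i = (C.mulVec x) i / (‖(C.mulVec x) i‖ : ℂ)) :
    a0 * cl2sq (fun i => y i - x i) ≤ quadC C y - quadC C x :=
  stmt_10_general C hC a0 hlb x y hx hy
end
end
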